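/- arXiv:1501.05083 — 2 statements merged into one kernel-verified Lean document; each statement's English description precedes it below -/
import Mathlib

section
/- Let Q be an m_ξ-primary ideal with orthogonal primal-dual pair (B, {Λ_0,...,Λ_{δ−1}}) and multiplication operators M_1,...,M_n by (x_i−ξ_i) on ℂ[x]/Q. Then for any p ∈ ℂ[x], the normal form of p satisfies N(p) = p(M)(1) = Σ_{k=0}^{δ−1} Λ_k(p)·(x−ξ)^{α_{k+1}}, where p(M) denotes substituting M_i for (x_i − ξ_i) in the Taylor expansion of p at ξ, applied to the class of 1. -/
open MvPolynomial

/-- Iterated partial derivative `∂^β` on multivariate polynomials. -/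
noncomputable def pd {n : ℕ} {K : Type*} [CommSemiring K] (β : Fin n → ℕ) :
    Module.End K (MvPolynomial (Fin n) K) :=
  (List.ofFn fun i : Fin n =>
    ((MvPolynomial.pderiv i).toLinearMap : Module.End K (MvPolynomial (Fin n) K)) ^ (β i)).prod

/-- The shifted monomial `(x−ξ)^α`. -/
noncomputable def xm {n : ℕ} (ξ : Fin n → ℂ) (α : Fin n → ℕ) : MvPolynomial (Fin n) ℂ :=
  ∏ i, (X i - C (ξ i)) ^ (α i)

/-- The orthogonal complement `J^⊥` of an ideal in the dual space. -/
noncomputable def perp {n : ℕ} (J : Ideal (MvPolynomial (Fin n) ℂ)) :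
    Submodule ℂ (Module.Dual ℂ (MvPolynomial (Fin n) ℂ)) :=
  (J.restrictScalars ℂ).dualAnnihilator

/-- `M^γ = M_1^{γ_1}···M_n^{γ_n}` where `M_i` is multiplication by the class of
`x_i − ξ_i` on `ℂ[x]/Q`. -/
noncomputable def multPow {n : ℕ} (ξ : Fin n → ℂ) (Q : Ideal (MvPolynomial (Fin n) ℂ))
    (γ : Fin n → ℕ) : Module.End ℂ (MvPolynomial (Fin n) ℂ ⧸ Q) :=
  (List.ofFn fun i : Fin n =>
    (LinearMap.mulLeft ℂ (Ideal.Quotient.mk Q (X i - C (ξ i))) :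
      Module.End ℂ (MvPolynomial (Fin n) ℂ ⧸ Q)) ^ (γ i)).prod

/-! Both sides of the Taylor identity `[p] = Σ_{γ ≤ o} (1/γ!) ∂^γ p(ξ) [(x−ξ)^γ]` in `ℂ[x]/Q` are
linear in `p`, so it suffices to check it on the shifted monomials `(x−ξ)^β`, which span `ℂ[x]`.
Their Taylor coefficients at `ξ` are Kronecker deltas, and those with some `β_i > o` lie in
`m_ξ^(o+1) ⊆ Q`. Since `M^γ 1 = [(x−ξ)^γ]`, the left-hand side is `[p]`. Finally, the functionals
`Λ_j` vanish on `Q` and are dual to the spanning family `[(x−ξ)^{α_k}]`, so the coefficients of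
`[p]` in that family are the `Λ_j(p)`. -/

lemma descFactorial_mul_zero_pow {R : Type*} [Semiring R] (m k : ℕ) :
    (m.descFactorial k : R) * 0 ^ (m - k) = if k = m then (k.factorial : R) else 0 := by
  rcases lt_trichotomy k m with hkm | rfl | hmk
  · simp [hkm.ne, Nat.sub_ne_zero_of_lt hkm]
  · simp [Nat.descFactorial_self]
  · simp [hmk.ne', Nat.descFactorial_eq_zero_iff_lt.mpr hmk]

section ShiftedMonomials

variable {n : ℕ} (ξ : Fin n → ℂ)

lemma eval_xm (β : Fin n → ℕ) : eval ξ (xm ξ β) = ∏ i, (0 : ℂ) ^ β i := by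
  simp [xm]

lemma span_range_xm : Submodule.span ℂ (Set.range (xm ξ)) = ⊤ := by
  have hclosure : (Submonoid.closure (Set.range fun i => X i - C (ξ i)) : Set _) =
      Set.range (xm ξ) := by
    ext q
    simp only [SetLike.mem_coe, Submonoid.mem_closure_range_iff_of_fintype, Set.mem_range, xm,
      eq_comm]
  have hadjoin : Algebra.adjoin ℂ (Set.range fun i => X i - C (ξ i)) = ⊤ := by
    rw [eq_top_iff, ← adjoin_range_X, Algebra.adjoin_le_iff]
    rintro _ ⟨i, rfl⟩
    have hX : (X i : MvPolynomial (Fin n) ℂ) = (X i - C (ξ i)) + algebraMap ℂ _ (ξ i) := by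
      simp [algebraMap_eq]
    rw [SetLike.mem_coe, hX]
    exact add_mem (Algebra.subset_adjoin ⟨i, rfl⟩) (Subalgebra.algebraMap_mem _ _)
  rw [← hclosure, ← Algebra.adjoin_eq_span, hadjoin, Algebra.top_toSubmodule]

lemma xm_mem_of_not_le {Q : Ideal (MvPolynomial (Fin n) ℂ)} {o : ℕ}
    (ho : RingHom.ker (eval ξ) ^ (o + 1) ≤ Q) {β : Fin n → ℕ} (hβ : ¬β ≤ fun _ => o) :
    xm ξ β ∈ Q := by
  simp only [Pi.le_def, not_forall, not_le] at hβ
  obtain ⟨i, hi⟩ := hβ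
  refine Q.mem_of_dvd ?_ (ho (Ideal.pow_mem_pow (x := X i - C (ξ i)) ?_ _))
  · exact (pow_dvd_pow _ (by omega)).trans (Finset.dvd_prod_of_mem _ (Finset.mem_univ i))
  · simp

lemma pderiv_xm (i : Fin n) (β : Fin n → ℕ) :
    pderiv i (xm ξ β) = β i • xm ξ (Function.update β i (β i - 1)) := by
  classical
  set R := ∏ j ∈ Finset.univ.erase i, (X j - C (ξ j)) ^ β j
  have hsplit : ∀ m, xm ξ (Function.update β i m) = (X i - C (ξ i)) ^ m * R := by
    intro m
    rw [xm, ← Finset.mul_prod_erase _ _ (Finset.mem_univ i), Function.update_self]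
    congr 1
    exact Finset.prod_congr rfl fun j hj => by
      rw [Function.update_of_ne (Finset.ne_of_mem_erase hj)]
  have hR : pderiv i R = 0 := by
    refine pderiv_eq_zero_of_notMem_vars fun hi => ?_
    obtain ⟨j, hj, hij⟩ := Finset.mem_biUnion.mp (vars_prod _ hi)
    have := vars_sub_subset _ (vars_pow _ _ hij)
    simp only [vars_X, vars_C, Finset.union_empty, Finset.mem_singleton] at this
    exact Finset.ne_of_mem_erase hj this.symm
  have hβ := hsplit (β i)
  rw [Function.update_eq_self] at hβ
  rw [hβ, hsplit, Derivation.leibniz, hR, Derivation.leibniz_pow]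
  simp only [nsmul_eq_mul, smul_eq_mul, mul_zero, zero_add, pderiv_X_self, map_sub, pderiv_C,
    sub_zero, mul_one]
  ring

lemma pderiv_pow_xm (i : Fin n) (k : ℕ) (β : Fin n → ℕ) :
    ((pderiv i).toLinearMap ^ k : Module.End ℂ (MvPolynomial (Fin n) ℂ)) (xm ξ β) =
      (β i).descFactorial k • xm ξ (Function.update β i (β i - k)) := by
  induction k with
  | zero => simp
  | succ k ih =>
    rw [pow_succ', Module.End.mul_apply, ih, map_nsmul, Derivation.coeFn_coe, pderiv_xm,
      Function.update_self, Function.update_idem, smul_smul, Nat.descFactorial_succ, mul_comm,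
      Nat.sub_sub]

lemma list_prod_pderiv_pow_xm (γ β : Fin n → ℕ) (l : List (Fin n)) (hl : l.Nodup) :
    (l.map fun i => ((pderiv i).toLinearMap ^ γ i : Module.End ℂ (MvPolynomial (Fin n) ℂ))).prod
        (xm ξ β) =
      (l.map fun i => (β i).descFactorial (γ i)).prod •
        xm ξ (fun j => if j ∈ l then β j - γ j else β j) := by
  induction l with
  | nil => simp
  | cons i l ih =>
    obtain ⟨hi, hl⟩ := List.nodup_cons.mp hl
    have hupdate : Function.update (fun j => if j ∈ l then β j - γ j else β j) i (β i - γ i) =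
        fun j => if j ∈ i :: l then β j - γ j else β j := by
      funext j
      by_cases hj : j = i
      · subst hj; simp
      · simp [hj]
    rw [List.map_cons, List.prod_cons, Module.End.mul_apply, ih hl, map_nsmul, pderiv_pow_xm,
      if_neg hi, hupdate, smul_smul, List.map_cons, List.prod_cons, mul_comm]

lemma pd_xm (γ β : Fin n → ℕ) :
    pd γ (xm ξ β) = (∏ i, (β i).descFactorial (γ i)) • xm ξ (β - γ) := by
  have h := list_prod_pderiv_pow_xm ξ γ β _ (List.nodup_finRange n)
  simp only [List.mem_finRange, if_true, ← List.ofFn_eq_map, List.prod_ofFn] at h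
  exact h

noncomputable def taylorCoeff (γ : Fin n → ℕ) : MvPolynomial (Fin n) ℂ →ₗ[ℂ] ℂ :=
  (∏ i, ((γ i).factorial : ℂ))⁻¹ • ((aeval ξ).toLinearMap ∘ₗ pd γ)

lemma taylorCoeff_apply (γ : Fin n → ℕ) (p : MvPolynomial (Fin n) ℂ) :
    taylorCoeff ξ γ p = (∏ i, ((γ i).factorial : ℂ))⁻¹ * eval ξ (pd γ p) := by
  simp [taylorCoeff]

lemma taylorCoeff_xm (γ β : Fin n → ℕ) :
    taylorCoeff ξ γ (xm ξ β) = if γ = β then 1 else 0 := by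
  rw [taylorCoeff_apply, pd_xm, map_nsmul, eval_xm, nsmul_eq_mul, Nat.cast_prod,
    ← Finset.prod_mul_distrib]
  simp only [Pi.sub_apply, descFactorial_mul_zero_pow, Fintype.prod_ite_zero, ← funext_iff]
  split_ifs
  · exact inv_mul_cancel₀ <|
      Finset.prod_ne_zero_iff.mpr fun i _ => Nat.cast_ne_zero.mpr (Nat.factorial_ne_zero _)
  · exact mul_zero _

theorem mk_eq_sum_taylorCoeff_smul {Q : Ideal (MvPolynomial (Fin n) ℂ)} {o : ℕ}
    (ho : RingHom.ker (eval ξ) ^ (o + 1) ≤ Q) (p : MvPolynomial (Fin n) ℂ) :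
    Ideal.Quotient.mk Q p =
      ∑ γ ∈ Finset.Iic (fun _ : Fin n => o), taylorCoeff ξ γ p • Ideal.Quotient.mk Q (xm ξ γ) := by
  have hext : (Ideal.Quotient.mkₐ ℂ Q).toLinearMap =
      ∑ γ ∈ Finset.Iic (fun _ : Fin n => o),
        (taylorCoeff ξ γ).smulRight (Ideal.Quotient.mk Q (xm ξ γ)) := by
    refine LinearMap.ext_on_range (span_range_xm ξ) fun β => ?_
    simp only [AlgHom.toLinearMap_apply, Ideal.Quotient.mkₐ_eq_mk, LinearMap.sum_apply,
      LinearMap.smulRight_apply, taylorCoeff_xm, ite_smul, one_smul, zero_smul,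
      Finset.sum_ite_eq', Finset.mem_Iic]
    split_ifs with hβ
    · rfl
    · exact Ideal.Quotient.eq_zero_iff_mem.mpr (xm_mem_of_not_le ξ ho (mt Finset.mem_Iic.mpr hβ))
  simpa using LinearMap.congr_fun hext p

lemma multPow_apply_one (Q : Ideal (MvPolynomial (Fin n) ℂ)) (γ : Fin n → ℕ) :
    multPow ξ Q γ (Ideal.Quotient.mk Q 1) = Ideal.Quotient.mk Q (xm ξ γ) := by
  have hlmul : multPow ξ Q γ = Algebra.lmul ℂ _ (Ideal.Quotient.mk Q (xm ξ γ)) := by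
    rw [xm, map_prod, ← List.prod_ofFn, map_list_prod, List.map_ofFn]
    simp only [multPow, Function.comp_def, map_pow]
    rfl
  rw [hlmul, map_one]
  exact mul_one _

end ShiftedMonomials

theorem Ideal.Quotient.mk_eq_sum_dual_smul {R A ι : Type*} [CommRing R] [CommRing A] [Algebra R A]
    [Fintype ι] [DecidableEq ι] (Q : Ideal A) (v : ι → A) (Λ : ι → Module.Dual R A)
    (hΛ : ∀ j, ∀ q ∈ Q, Λ j q = 0) (hdual : ∀ j k, Λ j (v k) = if j = k then 1 else 0)
    (hspan : Submodule.span R (Set.range fun k => Ideal.Quotient.mk Q (v k)) = ⊤) (p : A) :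
    Ideal.Quotient.mk Q p = ∑ k, Λ k p • Ideal.Quotient.mk Q (v k) := by
  obtain ⟨c, hc⟩ := Submodule.mem_span_range_iff_exists_fun R |>.mp (hspan ▸ Submodule.mem_top
    (x := Ideal.Quotient.mk Q p))
  have hmem : ∑ k, c k • v k - p ∈ Q := by
    rw [← Ideal.Quotient.eq, ← Ideal.Quotient.mkₐ_eq_mk R, map_sum]
    simpa using hc
  have hcoeff : ∀ j, Λ j p = c j := fun j => by
    have := hΛ j _ hmem
    simp only [map_sub, map_sum, map_smul, hdual, smul_eq_mul, mul_ite, mul_one, mul_zero,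
      Finset.sum_ite_eq, Finset.mem_univ, if_true] at this
    exact (sub_eq_zero.mp this).symm
  simp only [hcoeff, ← hc]

theorem normal_form_eq_pM_one_general {n δ : ℕ} (ξ : Fin n → ℂ)
    (Q : Ideal (MvPolynomial (Fin n) ℂ))
    (o : ℕ) (ho : (RingHom.ker (MvPolynomial.eval ξ)) ^ (o + 1) ≤ Q)
    (α : Fin δ → (Fin n → ℕ)) (Λ : Fin δ → Module.Dual ℂ (MvPolynomial (Fin n) ℂ))
    (hperp : ∀ j, Λ j ∈ perp Q)
    (hdual : ∀ j k, Λ j (xm ξ (α k)) = if j = k then 1 else 0)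
    (hbasis : Submodule.span ℂ (Set.range fun k => Ideal.Quotient.mk Q (xm ξ (α k))) = ⊤)
    (p : MvPolynomial (Fin n) ℂ) :
    (∑ γ ∈ Finset.Iic (fun _ : Fin n => o),
        ((∏ i, ((γ i).factorial : ℂ))⁻¹ * MvPolynomial.eval ξ (pd γ p)) •
          multPow ξ Q γ (Ideal.Quotient.mk Q 1)) =
      ∑ k, Λ k p • Ideal.Quotient.mk Q (xm ξ (α k)) ∧
    Ideal.Quotient.mk Q p = ∑ k, Λ k p • Ideal.Quotient.mk Q (xm ξ (α k)) := by
  have hnormal : Ideal.Quotient.mk Q p = ∑ k, Λ k p • Ideal.Quotient.mk Q (xm ξ (α k)) :=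
    Ideal.Quotient.mk_eq_sum_dual_smul Q _ Λ
      (fun j => (Submodule.mem_dualAnnihilator _).mp (hperp j)) hdual hbasis p
  refine ⟨?_, hnormal⟩
  simp only [multPow_apply_one, ← taylorCoeff_apply, ← mk_eq_sum_taylorCoeff_smul ξ ho, hnormal]

/-- The normal form satisfies `N(p) = p(M)(1) = Σ_k Λ_k(p)·(x−ξ)^{α_{k+1}}`, where
`p(M) = Σ_γ (1/γ!)∂^γ(p)(ξ)·M^γ` is obtained by substituting the (nilpotent, commuting)
multiplication operators `M_i` for `x_i − ξ_i` in the Taylor expansion of `p` at `ξ`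
(a finite sum since `M^γ = 0` for `|γ| > o`). -/
theorem normal_form_eq_pM_one {n δ : ℕ} (ξ : Fin n → ℂ)
    (Q : Ideal (MvPolynomial (Fin n) ℂ))
    (hprim : Q.IsPrimary)
    (hrad : Q.radical = RingHom.ker (MvPolynomial.eval ξ))
    (o : ℕ) (ho : (RingHom.ker (MvPolynomial.eval ξ)) ^ (o + 1) ≤ Q)
    (α : Fin δ → (Fin n → ℕ)) (Λ : Fin δ → Module.Dual ℂ (MvPolynomial (Fin n) ℂ))
    (hperp : ∀ j, Λ j ∈ perp Q)
    (hdual : ∀ j k, Λ j (xm ξ (α k)) = if j = k then 1 else 0)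
    (hbasis : Submodule.span ℂ (Set.range fun k => Ideal.Quotient.mk Q (xm ξ (α k))) = ⊤)
    (p : MvPolynomial (Fin n) ℂ) :
    (∑ γ ∈ Finset.Iic (fun _ : Fin n => o),
        ((∏ i, ((γ i).factorial : ℂ))⁻¹ * MvPolynomial.eval ξ (pd γ p)) •
          multPow ξ Q γ (Ideal.Quotient.mk Q 1)) =
      ∑ k, Λ k p • Ideal.Quotient.mk Q (xm ξ (α k)) ∧
    Ideal.Quotient.mk Q p = ∑ k, Λ k p • Ideal.Quotient.mk Q (xm ξ (α k)) :=
  normal_form_eq_pM_one_general ξ Q o ho α Λ hperp hdual hbasis p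
end

section
/- Specialization of the parametric normal form at the true root and dual coefficients recovers the dual basis evaluations: N_{ξ,ν}(p) = (Λ_0(p), Λ_1(p), ..., Λ_{δ−1}(p))^t for every p ∈ ℂ[x], where Λ_0,...,Λ_{δ−1} is the orthogonal dual basis of the m_ξ-primary component Q. -/
open MvPolynomial

/-- The linear functional `∂^β_ξ : p ↦ ∂^β(p)(ξ)`. -/
noncomputable def diffAt {n : ℕ} (ξ : Fin n → ℂ) (β : Fin n → ℕ) :
    Module.Dual ℂ (MvPolynomial (Fin n) ℂ) :=
  (MvPolynomial.aeval ξ).toLinearMap.comp (pd β)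

/-- `M^γ = M_1^{γ_1}···M_n^{γ_n}` (in this fixed order) for a family of matrices. -/
noncomputable def matPow {n δ : ℕ} {R : Type*} [CommRing R]
    (M : Fin n → Matrix (Fin δ) (Fin δ) R) (γ : Fin n → ℕ) : Matrix (Fin δ) (Fin δ) R :=
  (List.ofFn fun i : Fin n => (M i) ^ (γ i)).prod

/-! Each `Λ_k` is a combination of the functionals `∂^β_ξ` with `|β| ≤ o`, and these are dual
to the shifted monomials, `∂^β_ξ((x−ξ)^γ) = γ! δ_{βγ}` (the case `ξ = 0` transported along the
substitution `x ↦ x − ξ`, which commutes with `∂^β`). Hence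
`Λ_k(p) = ∑_γ ∂^γ_ξ(p)/γ! · Λ_k((x−ξ)^γ)`, a truncated Taylor expansion at `ξ`.
It remains to see that `M^γ[1] = (Λ_k((x−ξ)^γ))_k`. Since the `Λ_k` span `Q^⊥` and are dual to
the `(x−ξ)^{α_l}`, every `r` is congruent to `∑_l Λ_l(r) (x−ξ)^{α_l}` modulo `Q`; so `M_i` maps
the vector `(Λ_k(r))_k` to `(Λ_k(r (x_i−ξ_i)))_k`, and `[1] = (Λ_k(1))_k`. -/

open scoped Matrix

section IteratedDerivatives

variable {n : ℕ} {R : Type*} [CommSemiring R]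

lemma pderiv_pow_monomial (i : Fin n) (b : ℕ) (s : Fin n →₀ ℕ) (a : R) :
    (((pderiv i).toLinearMap : Module.End R (MvPolynomial (Fin n) R)) ^ b) (monomial s a)
      = monomial (s - Finsupp.single i b) (a * (s i).descFactorial b) := by
  induction b with
  | zero => simp
  | succ b ih =>
    rw [pow_succ', Module.End.mul_apply, ih, Derivation.coeFn_coe, pderiv_monomial,
      tsub_tsub, ← Finsupp.single_add, Nat.descFactorial_succ]
    simp only [Finsupp.coe_tsub, Pi.sub_apply, Finsupp.single_eq_same]
    push_cast
    ring_nf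

lemma list_prod_pderiv_pow_monomial (β : Fin n → ℕ) (l : List (Fin n)) (hl : l.Nodup)
    (s : Fin n →₀ ℕ) (a : R) :
    (l.map fun i => ((pderiv i).toLinearMap : Module.End R (MvPolynomial (Fin n) R)) ^ β i).prod
        (monomial s a)
      = monomial (s - (l.map fun i => Finsupp.single i (β i)).sum)
          (a * (l.map fun i => (s i).descFactorial (β i)).prod) := by
  induction l with
  | nil => simp
  | cons i t ih =>
    obtain ⟨hit, ht⟩ := List.nodup_cons.mp hl
    have hsi : (t.map fun j => Finsupp.single j (β j)).sum i = 0 := by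
      rw [← Finsupp.applyAddHom_apply, map_list_sum, List.map_map]
      exact List.sum_eq_zero fun x hx => by
        obtain ⟨j, hj, rfl⟩ := List.mem_map.mp hx
        exact Finsupp.single_eq_of_ne (by rintro rfl; exact hit hj)
    simp only [List.map_cons, List.prod_cons, List.sum_cons, Module.End.mul_apply, ih ht,
      pderiv_pow_monomial, Finsupp.coe_tsub, Pi.sub_apply, hsi, tsub_zero, tsub_tsub,
      add_comm (Finsupp.single i (β i)), Nat.cast_mul, mul_assoc,
      mul_comm ((s i).descFactorial _ : R)]

lemma pd_monomial (β : Fin n → ℕ) (s : Fin n →₀ ℕ) (a : R) :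
    pd β (monomial s a)
      = monomial (s - Finsupp.equivFunOnFinite.symm β) (a * ∏ i, (s i).descFactorial (β i)) := by
  rw [pd, List.ofFn_eq_map, list_prod_pderiv_pow_monomial β _ (List.nodup_finRange n),
    ← List.ofFn_eq_map, ← List.ofFn_eq_map, List.sum_ofFn, List.prod_ofFn]
  congr 2
  ext j
  simp [Finsupp.single_apply]

end IteratedDerivatives

section Shift

variable {n : ℕ} {R : Type*} [CommRing R]

noncomputable def shift (ξ : Fin n → R) : MvPolynomial (Fin n) R →ₐ[R] MvPolynomial (Fin n) R :=
  aeval fun i => X i - C (ξ i)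

lemma pderiv_shift (ξ : Fin n → R) (j : Fin n) (p : MvPolynomial (Fin n) R) :
    pderiv j (shift ξ p) = shift ξ (pderiv j p) := by
  induction p using MvPolynomial.induction_on with
  | C a => simp [shift]
  | add p q hp hq => simp only [map_add, hp, hq]
  | mul_X p i hp =>
    have hX : shift ξ (X i) = X i - C (ξ i) := aeval_X _ _
    simp only [map_mul, pderiv_mul, hp, map_add, hX, pderiv_X, map_sub, pderiv_C, sub_zero,
      Pi.single_apply]
    split_ifs <;> simp

lemma commute_pderiv_shift (ξ : Fin n → R) (j : Fin n) :
    Commute ((pderiv j).toLinearMap : Module.End R (MvPolynomial (Fin n) R))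
      (shift ξ).toLinearMap :=
  LinearMap.ext fun p => pderiv_shift ξ j p

lemma pd_shift (ξ : Fin n → R) (β : Fin n → ℕ) (p : MvPolynomial (Fin n) R) :
    pd β (shift ξ p) = shift ξ (pd β p) := by
  have h : Commute (pd β) (shift ξ).toLinearMap :=
    Commute.list_prod_left _ _ fun _ hx => by
      obtain ⟨j, rfl⟩ := List.mem_ofFn.mp hx
      exact (commute_pderiv_shift ξ j).pow_left _
  exact LinearMap.congr_fun h p

lemma aeval_shift (ξ : Fin n → R) (p : MvPolynomial (Fin n) R) :
    aeval ξ (shift ξ p) = constantCoeff p := by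
  rw [shift, ← AlgHom.comp_apply, comp_aeval, ← eval_zero]
  simp

end Shift

lemma xm_eq_shift_monomial {n : ℕ} (ξ : Fin n → ℂ) (γ : Fin n → ℕ) :
    xm ξ γ = shift ξ (monomial (Finsupp.equivFunOnFinite.symm γ) 1) := by
  rw [monomial_eq, C_1, one_mul, Finsupp.prod_fintype _ _ fun i => pow_zero _, map_prod]
  simp [xm, shift]

lemma xm_add_single {n : ℕ} (ξ : Fin n → ℂ) (β : Fin n → ℕ) (i : Fin n) :
    xm ξ (β + Pi.single i 1) = xm ξ β * (X i - C (ξ i)) := by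
  simp only [xm, Pi.add_apply, pow_add, Finset.prod_mul_distrib, Pi.single_apply, pow_ite,
    pow_one, pow_zero, Finset.prod_ite_eq', Finset.mem_univ, if_true]

lemma diffAt_xm {n : ℕ} (ξ : Fin n → ℂ) (β γ : Fin n → ℕ) :
    diffAt ξ β (xm ξ γ) = if β = γ then (∏ i, (γ i).factorial : ℂ) else 0 := by
  rw [diffAt, LinearMap.comp_apply, xm_eq_shift_monomial, pd_shift, AlgHom.toLinearMap_apply,
    aeval_shift, pd_monomial, constantCoeff_monomial, one_mul]
  simp only [tsub_eq_zero_iff_le, Finsupp.coe_equivFunOnFinite_symm]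
  by_cases hβγ : β = γ
  · subst hβγ
    simp [Nat.descFactorial_self]
  rw [if_neg hβγ]
  by_cases hγβ : γ ≤ β
  · obtain ⟨-, i, hi⟩ := Pi.lt_def.mp (lt_of_le_of_ne hγβ (Ne.symm hβγ))
    have hzero : ∏ i, (γ i).descFactorial (β i) = 0 :=
      Finset.prod_eq_zero (Finset.mem_univ i) (Nat.descFactorial_eq_zero_iff_lt.mpr hi)
    simp [hzero]
  · exact if_neg fun h => hγβ fun i => h i

lemma apply_eq_sum_of_mem_span_diffAt {n : ℕ} (ξ : Fin n → ℂ) (s : Finset (Fin n → ℕ))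
    {L : Module.Dual ℂ (MvPolynomial (Fin n) ℂ)} (hL : L ∈ Submodule.span ℂ (diffAt ξ '' s))
    (p : MvPolynomial (Fin n) ℂ) :
    L p = ∑ γ ∈ s, ((∏ i, ((γ i).factorial : ℂ))⁻¹ * eval ξ (pd γ p)) * L (xm ξ γ) := by
  suffices h : Set.EqOn (Module.Dual.eval ℂ _ p) (∑ γ ∈ s,
      ((∏ i, ((γ i).factorial : ℂ))⁻¹ * eval ξ (pd γ p)) • Module.Dual.eval ℂ _ (xm ξ γ) :
        Module.Dual ℂ (Module.Dual ℂ (MvPolynomial (Fin n) ℂ))) (diffAt ξ '' s) by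
    simpa using LinearMap.eqOn_span h hL
  rintro _ ⟨β, hβ, rfl⟩
  have hfact : (∏ i, ((β i).factorial : ℂ)) ≠ 0 :=
    Finset.prod_ne_zero_iff.mpr fun i _ => Nat.cast_ne_zero.mpr (Nat.factorial_ne_zero _)
  simp only [Module.Dual.eval_apply, LinearMap.sum_apply, LinearMap.smul_apply,
    smul_eq_mul, diffAt_xm, mul_ite, mul_zero, Finset.sum_ite_eq, Finset.mem_coe.mp hβ, if_true]
  rw [mul_comm, mul_inv_cancel_left₀ hfact]
  rfl

section DualBasis

variable {K ι : Type*} [Field K] [Fintype ι] [DecidableEq ι]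

lemma sub_sum_smul_mem_of_span_eq_dualAnnihilator {V : Type*} [AddCommGroup V] [Module K V]
    {W : Subspace K V} {Λ : ι → Module.Dual K V} {b : ι → V}
    (hdual : ∀ j k, Λ j (b k) = if j = k then 1 else 0)
    (hspan : Submodule.span K (Set.range Λ) = W.dualAnnihilator) (v : V) :
    v - ∑ l, Λ l v • b l ∈ W := by
  rw [← Subspace.forall_mem_dualAnnihilator_apply_eq_zero_iff, ← hspan]
  intro φ hφ
  refine LinearMap.eqOn_span (R := K) (f := Module.Dual.eval K V (v - ∑ l, Λ l v • b l))
    (g := 0) ?_ hφ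
  rintro _ ⟨j, rfl⟩
  simp [hdual]

lemma mulVec_dual_apply_eq_apply_mul {A : Type*} [CommRing A] [Algebra K A] {Q : Ideal A}
    {Λ : ι → Module.Dual K A} {b : ι → A}
    (hdual : ∀ j k, Λ j (b k) = if j = k then 1 else 0)
    (hspan : Submodule.span K (Set.range Λ) = (Q.restrictScalars K).dualAnnihilator) (r y : A) :
    Matrix.of (fun k l => Λ k (b l * y)) *ᵥ (fun k => Λ k r) = fun k => Λ k (r * y) := by
  funext k
  have hmem : (r - ∑ l, Λ l r • b l) * y ∈ Q :=
    Q.mul_mem_right y (sub_sum_smul_mem_of_span_eq_dualAnnihilator hdual hspan r)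
  have hΛk : Λ k ∈ (Q.restrictScalars K).dualAnnihilator :=
    hspan ▸ Submodule.subset_span (Set.mem_range_self k)
  have hkill : Λ k ((r - ∑ l, Λ l r • b l) * y) = 0 :=
    (Submodule.mem_dualAnnihilator _).mp hΛk _ hmem
  rw [sub_mul, Finset.sum_mul, map_sub, map_sum, sub_eq_zero] at hkill
  simp only [hkill, Matrix.mulVec, dotProduct, Matrix.of_apply, smul_mul_assoc, map_smul,
    smul_eq_mul]
  exact Finset.sum_congr rfl fun l _ => mul_comm _ _

end DualBasis

section MatPow

variable {δ : ℕ} {R A : Type*} [CommRing R] [CommMonoid A] (v : A → Fin δ → R)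

lemma pow_mulVec_eq_of_forall_mulVec_eq {M : Matrix (Fin δ) (Fin δ) R} {y : A}
    (hM : ∀ r, M *ᵥ v r = v (r * y)) (b : ℕ) (r : A) : (M ^ b) *ᵥ v r = v (r * y ^ b) := by
  induction b with
  | zero => simp
  | succ b ih => rw [pow_succ', ← Matrix.mulVec_mulVec, ih, hM, pow_succ, mul_assoc]

lemma matPow_mulVec_eq_of_forall_mulVec_eq {n : ℕ} {M : Fin n → Matrix (Fin δ) (Fin δ) R}
    {y : Fin n → A} (hM : ∀ i r, M i *ᵥ v r = v (r * y i)) (γ : Fin n → ℕ) (r : A) :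
    matPow M γ *ᵥ v r = v (r * ∏ i, y i ^ γ i) := by
  induction n generalizing r with
  | zero => simp [matPow]
  | succ n ih =>
    have hsplit : matPow M γ = M 0 ^ γ 0 * matPow (fun i => M i.succ) (fun i => γ i.succ) := by
      simp [matPow, List.ofFn_succ]
    rw [hsplit, ← Matrix.mulVec_mulVec, ih (fun i => hM i.succ),
      pow_mulVec_eq_of_forall_mulVec_eq v (hM 0), Fin.prod_univ_succ, mul_comm (y 0 ^ γ 0),
      mul_assoc]

end MatPow

theorem parametric_normal_form_specialization_general {n δ : ℕ} (hδ : 0 < δ) (ξ : Fin n → ℂ)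
    (Q : Ideal (MvPolynomial (Fin n) ℂ))
    (o : ℕ)
    (α : Fin δ → (Fin n → ℕ)) (hzero : α ⟨0, hδ⟩ = 0)
    (Λ : Fin δ → Module.Dual ℂ (MvPolynomial (Fin n) ℂ))
    (hdual : ∀ j k, Λ j (xm ξ (α k)) = if j = k then 1 else 0)
    (hspan : Submodule.span ℂ (Set.range Λ) = perp Q)
    (horder : ∀ j, Λ j ∈ Submodule.span ℂ
      {L | ∃ β : Fin n → ℕ, (∑ i, β i) ≤ o ∧ L = diffAt ξ β})
    (M : Fin n → Matrix (Fin δ) (Fin δ) ℂ)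
    (hM : ∀ i k l, M i k l = Λ k (xm ξ (α l + Pi.single i 1)))
    (p : MvPolynomial (Fin n) ℂ) :
    (fun k => ∑ γ ∈ Finset.Iic (fun _ : Fin n => o),
      ((∏ i, ((γ i).factorial : ℂ))⁻¹ * MvPolynomial.eval ξ (pd γ p)) *
        matPow M γ k ⟨0, hδ⟩) = fun k => Λ k p := by
  let v : MvPolynomial (Fin n) ℂ → Fin δ → ℂ := fun r k => Λ k r
  have hmul : ∀ i r, M i *ᵥ v r = v (r * (X i - C (ξ i))) := fun i r => by
    have hMi : M i = Matrix.of fun k l => Λ k (xm ξ (α l) * (X i - C (ξ i))) := by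
      ext k l
      rw [hM, xm_add_single, Matrix.of_apply]
    rw [hMi]
    exact mulVec_dual_apply_eq_apply_mul hdual hspan r _
  have hone : v 1 = Pi.single ⟨0, hδ⟩ 1 := by
    funext k
    rw [← show xm ξ (α ⟨0, hδ⟩) = 1 by simp [hzero, xm]]
    simp [v, hdual, Pi.single_apply]
  have hcol : ∀ γ k, matPow M γ k ⟨0, hδ⟩ = Λ k (xm ξ γ) := fun γ k => by
    simpa [hone, v, xm] using
      congr_fun (matPow_mulVec_eq_of_forall_mulVec_eq v hmul γ 1) k
  have horder' : ∀ j, Λ j ∈ Submodule.span ℂ (diffAt ξ '' ↑(Finset.Iic fun _ : Fin n => o)) := by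
    refine fun j => Submodule.span_mono ?_ (horder j)
    rintro _ ⟨β, hβ, rfl⟩
    refine ⟨β, Finset.mem_Iic.mpr fun i => ?_, rfl⟩
    exact (Finset.single_le_sum (by simp) (Finset.mem_univ i)).trans hβ
  funext k
  simp only [hcol, ← apply_eq_sum_of_mem_span_diffAt ξ _ (horder' k)]

/-- Specializing the parametric normal form at the true root `ξ` and true dual
coefficients `ν` (i.e. using the actual multiplication matrices
`(M_i)_{k,l} = Λ_k((x−ξ)^{α_l+e_i})` of `ℂ[x]/Q` in the basis `B`) recovers the dual
basis evaluations: `N_{ξ,ν}(p) = (Λ_0(p),…,Λ_{δ−1}(p))ᵗ` for every `p`. -/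
theorem parametric_normal_form_specialization {n δ : ℕ} (hδ : 0 < δ) (ξ : Fin n → ℂ)
    (Q : Ideal (MvPolynomial (Fin n) ℂ))
    (hprim : Q.IsPrimary)
    (hrad : Q.radical = RingHom.ker (MvPolynomial.eval ξ))
    (o : ℕ) (ho : (RingHom.ker (MvPolynomial.eval ξ)) ^ (o + 1) ≤ Q)
    (α : Fin δ → (Fin n → ℕ)) (hzero : α ⟨0, hδ⟩ = 0)
    (hconn : ∀ k, α k ≠ 0 → ∃ l i, α k = α l + Pi.single i 1)
    (Λ : Fin δ → Module.Dual ℂ (MvPolynomial (Fin n) ℂ))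
    (hperp : ∀ j, Λ j ∈ perp Q)
    (hdual : ∀ j k, Λ j (xm ξ (α k)) = if j = k then 1 else 0)
    (hspan : Submodule.span ℂ (Set.range Λ) = perp Q)
    (horder : ∀ j, Λ j ∈ Submodule.span ℂ
      {L | ∃ β : Fin n → ℕ, (∑ i, β i) ≤ o ∧ L = diffAt ξ β})
    (M : Fin n → Matrix (Fin δ) (Fin δ) ℂ)
    (hM : ∀ i k l, M i k l = Λ k (xm ξ (α l + Pi.single i 1)))
    (p : MvPolynomial (Fin n) ℂ) :
    (fun k => ∑ γ ∈ Finset.Iic (fun _ : Fin n => o),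
      ((∏ i, ((γ i).factorial : ℂ))⁻¹ * MvPolynomial.eval ξ (pd γ p)) *
        matPow M γ k ⟨0, hδ⟩) = fun k => Λ k p :=
  parametric_normal_form_specialization_general hδ ξ Q o α hzero Λ hdual hspan horder M hM p
end
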